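/- arXiv:math/0311308 — 7 statements merged into one kernel-verified Lean document; each statement's English description precedes it below -/
import Mathlib

section
/- Let K be a field of characteristic zero and let t ∈ K. For every pair (x, y) ∈ K × K satisfying y² = x·(x − 4)·(P(x) − t), the pair (u, v) = (P(x), y·Q(x)) satisfies v² = u·(u − 1)·(u − t). Equivalently, the polynomial identity P(X)·(P(X) − 1) = X·(X − 4)·Q(X)² holds in K[X]. (Thus π(x, y) = (P(x), y·Q(x)) defines the degree-3 origami covering from the genus-2 curve X_t : y² = x(x−4)(P(x)−t) to the Legendre elliptic curve E_t : v² = u(u−1)(u−t), as in Proposition 4.1 for the origami L(2,2).) -/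
open Polynomial

/-- The identity behind the covering: `x(x-3)² - (x-4)(x-1)² = 4`, so with `P = c·x(x-3)²` and
`Q = c(x-3)(x-1)` the difference `P(P-1) - x(x-4)Q²` is `x(x-3)²·(4c² - c)`. -/
theorem origami_identity {R : Type*} [CommRing R] (c x : R) (hc : 4 * c ^ 2 = c) :
    (c * x * (x - 3) ^ 2) * (c * x * (x - 3) ^ 2 - 1) = x * (x - 4) * (c * (x - 3) * (x - 1)) ^ 2 := by
  linear_combination x * (x - 3) ^ 2 * hc

/-- In characteristic `2` this holds because `1 / 4 = 0`. -/
theorem four_mul_one_div_four_sq (K : Type*) [Field K] : 4 * (1 / 4 : K) ^ 2 = 1 / 4 := by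
  rcases eq_or_ne (4 : K) 0 with h | h
  · simp [h]
  · field_simp

theorem stmt_0_general (K : Type*) [Field K] (t : K) :
    (∀ x y : K,
      y ^ 2 = x * (x - 4) * ((1 / 4) * x * (x - 3) ^ 2 - t) →
      (y * ((1 / 4) * (x - 3) * (x - 1))) ^ 2 =
        ((1 / 4) * x * (x - 3) ^ 2) * ((1 / 4) * x * (x - 3) ^ 2 - 1) *
          ((1 / 4) * x * (x - 3) ^ 2 - t)) ∧
    (C (1 / 4 : K) * X * (X - 3) ^ 2) * (C (1 / 4 : K) * X * (X - 3) ^ 2 - 1) =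
      X * (X - 4) * (C (1 / 4 : K) * (X - 3) * (X - 1)) ^ 2 := by
  have hK := four_mul_one_div_four_sq K
  refine ⟨fun x y hxy => ?_, origami_identity _ _ ?_⟩
  · rw [mul_pow, hxy, origami_identity _ x hK]
    ring
  · simpa only [map_mul, map_pow, map_ofNat] using congrArg C hK

/-- Proposition 4.1 (origami `L(2,2)`): with `P(X) = (1/4)·X·(X−3)²` and
`Q(X) = (1/4)·(X−3)·(X−1)`, every point `(x,y)` of the curve
`y² = x(x−4)(P(x)−t)` maps under `(x,y) ↦ (P(x), y·Q(x))` to a point of the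
Legendre curve `v² = u(u−1)(u−t)`; equivalently, the polynomial identity
`P(X)·(P(X)−1) = X·(X−4)·Q(X)²` holds in `K[X]`. -/
theorem stmt_0 (K : Type*) [Field K] [CharZero K] (t : K) :
    (∀ x y : K,
      y ^ 2 = x * (x - 4) * ((1 / 4) * x * (x - 3) ^ 2 - t) →
      (y * ((1 / 4) * (x - 3) * (x - 1))) ^ 2 =
        ((1 / 4) * x * (x - 3) ^ 2) * ((1 / 4) * x * (x - 3) ^ 2 - 1) *
          ((1 / 4) * x * (x - 3) ^ 2 - t)) ∧
    (C (1 / 4 : K) * X * (X - 3) ^ 2) * (C (1 / 4 : K) * X * (X - 3) ^ 2 - 1) =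
      X * (X - 4) * (C (1 / 4 : K) * (X - 3) * (X - 1)) ^ 2 :=
  stmt_0_general K t
end

section
/- Let K be a field of characteristic zero. For every t ∈ K with t ≠ 0 and t ≠ 1, the degree-5 polynomial X·(X − 4)·(P(X) − t) ∈ K[X] is squarefree. (Hence for t ∉ {0,1} the curve y² = x(x−4)(P(x)−t) of the family of Proposition 4.1 is a smooth hyperelliptic curve of genus 2.) -/
/-!
`P(X) = X(X - 3)²/4` has critical points `1` and `3`, with `P(1) = P(4) = 1` and `P(3) = P(0) = 0`.
Hence for `t ∉ {0, 1}` the polynomial `P - t` vanishes neither at a root of `P'` (so it is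
separable) nor at `0` or `4` (so it is coprime to `X(X - 4)`).
-/

open Polynomial

section

variable {K : Type*} [Field K]

theorem isCoprime_X_sub_C_of_eval_ne_zero {p : K[X]} {a : K} (h : p.eval a ≠ 0) :
    IsCoprime (X - C a) p :=
  (irreducible_X_sub_C a).coprime_iff_not_dvd.2 (by rwa [dvd_iff_isRoot])

theorem separable_of_derivative_eq {f : K[X]} {c a b : K} (hc : c ≠ 0)
    (hf' : derivative f = C c * (X - C a) * (X - C b)) (ha : f.eval a ≠ 0)
    (hb : f.eval b ≠ 0) : f.Separable := by
  rw [Separable, hf']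
  refine IsCoprime.mul_right (IsCoprime.mul_right ?_ ?_) ?_
  · exact isCoprime_one_right.of_isCoprime_of_dvd_right (isUnit_C.2 (Ne.isUnit hc)).dvd
  · exact (isCoprime_X_sub_C_of_eval_ne_zero ha).symm
  · exact (isCoprime_X_sub_C_of_eval_ne_zero hb).symm

theorem separable_X_mul_X_sub_C_mul {q : K[X]} {a : K} (ha : a ≠ 0) (hq : q.Separable)
    (hq0 : q.eval 0 ≠ 0) (hqa : q.eval a ≠ 0) : (X * (X - C a) * q).Separable := by
  have hX : IsCoprime (X : K[X]) q := by
    simpa using isCoprime_X_sub_C_of_eval_ne_zero hq0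
  refine separable_X.mul separable_X_sub_C ?_ |>.mul hq ?_
  · simpa using isCoprime_X_sub_C_of_isUnit_sub (R := K) (a := 0) (b := a) (by simpa using ha)
  · exact hX.mul_left (isCoprime_X_sub_C_of_eval_ne_zero hqa)

end

/-- For `t ∉ {0,1}` the degree-5 polynomial `X·(X−4)·(P(X)−t)` with
`P(X) = (1/4)·X·(X−3)²` is squarefree over a field of characteristic zero. -/
theorem stmt_1 (K : Type*) [Field K] [CharZero K] (t : K) (h0 : t ≠ 0) (h1 : t ≠ 1) :
    Squarefree (X * (X - 4) * (C (1 / 4 : K) * X * (X - 3) ^ 2 - C t)) := by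
  set Q : K[X] := C (1 / 4 : K) * X * (X - 3) ^ 2 - C t
  have hQ' : derivative Q = C (3 / 4 : K) * (X - C 1) * (X - C 3) := by
    simp only [Q, derivative_sub, derivative_mul, derivative_pow, derivative_C, derivative_X,
      derivative_ofNat, map_ofNat, map_one, Nat.cast_ofNat]
    rw [show C (3 / 4 : K) = 3 * C (1 / 4) by rw [← map_ofNat C 3, ← C_mul]; norm_num]
    ring
  have hQ0 : Q.eval 0 ≠ 0 := by simpa [Q] using h0
  have hQ1 : Q.eval 1 ≠ 0 := by norm_num [Q]; exact fun h => h1 (by linear_combination -h)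
  have hQ3 : Q.eval 3 ≠ 0 := by norm_num [Q]; exact h0
  have hQ4 : Q.eval 4 ≠ 0 := by norm_num [Q]; exact fun h => h1 (by linear_combination -h)
  have hQ : Q.Separable := separable_of_derivative_eq (by norm_num) hQ' hQ1 hQ3
  rw [show (X - 4 : K[X]) = X - C 4 by simp [map_ofNat]]
  exact (separable_X_mul_X_sub_C_mul (by norm_num) hQ hQ0 hQ4).squarefree
end

section
/- Let K be a field of characteristic zero and let t ∈ K. For every pair (x, y) ∈ K × K satisfying y² = (P(x)² − (1 − t))·(P(x) − 1), the pair (s, w) = (P(x)², y·P(x)·(2x − 1)) satisfies w² = s·(s − 1)·(s − (1 − t)). (This is the degree-4 origami covering π = ι ∘ π₁ : X_t → E_t of the two-steps origami 𝒮₂, as in Proposition 4.2; in particular π factors through the intermediate curve E₁,t.) -/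
/-! Since `(2x − 1)² = P(x) + 1`, multiplying the equation of `X_t` by `P(x)²(2x − 1)²` turns
`(P − 1)` into `(P − 1)(P + 1) = P² − 1`, which is the equation of `E_t` at `s = P(x)²`. -/

theorem sq_two_mul_sub_one_eq {R : Type*} [CommRing R] (x : R) :
    (2 * x - 1) ^ 2 = 4 * x * (x - 1) + 1 := by
  ring

theorem sq_mul_mul_eq_of_sq_eq {R : Type*} [CommRing R] {p q y c : R}
    (hy : y ^ 2 = (p ^ 2 - c) * (p - 1)) (hq : q ^ 2 = p + 1) :
    (y * p * q) ^ 2 = p ^ 2 * (p ^ 2 - 1) * (p ^ 2 - c) := by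
  linear_combination p ^ 2 * (p + 1) * hy + y ^ 2 * p ^ 2 * hq

theorem stmt_5_general (K : Type*) [Field K] (t : K) (x y : K)
    (h : y ^ 2 = ((4 * x * (x - 1)) ^ 2 - (1 - t)) * (4 * x * (x - 1) - 1)) :
    (y * (4 * x * (x - 1)) * (2 * x - 1)) ^ 2 =
      (4 * x * (x - 1)) ^ 2 * ((4 * x * (x - 1)) ^ 2 - 1) *
        ((4 * x * (x - 1)) ^ 2 - (1 - t)) :=
  sq_mul_mul_eq_of_sq_eq h (sq_two_mul_sub_one_eq x)

/-- Proposition 4.2, the degree-4 origami covering `π = ι ∘ π₁ : X_t → E_t` of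
the two-steps origami `𝒮₂`: with `P(x) = 4x(x−1)`, every point `(x,y)` of
`y² = (P(x)² − (1−t))·(P(x) − 1)` maps under
`(x,y) ↦ (P(x)², y·P(x)·(2x−1))` to a point of `w² = s(s−1)(s−(1−t))`. -/
theorem stmt_5 (K : Type*) [Field K] [CharZero K] (t : K) (x y : K)
    (h : y ^ 2 = ((4 * x * (x - 1)) ^ 2 - (1 - t)) * (4 * x * (x - 1) - 1)) :
    (y * (4 * x * (x - 1)) * (2 * x - 1)) ^ 2 =
      (4 * x * (x - 1)) ^ 2 * ((4 * x * (x - 1)) ^ 2 - 1) *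
        ((4 * x * (x - 1)) ^ 2 - (1 - t)) :=
  stmt_5_general K t x y h
end

section
/- Let K be a field of characteristic zero. For every t ∈ K with t ≠ 0 and t ≠ 1, the degree-6 polynomial (P(X)² − (1 − t))·(P(X) − 1) ∈ K[X] is squarefree. (Hence for t ∉ {0,1} the fibre X_t : y² = (P(x)² − (1−t))(P(x) − 1) of the family of Proposition 4.2 is a smooth hyperelliptic curve of genus 2.) -/
/-!
Write the polynomial as `g ∘ P` with `g = (Y² − (1 − t))(Y − 1)`. The cubic `g` is separable
for `t ≠ 0, 1`, and `(g ∘ P)' = P' · (g' ∘ P)`, so `g ∘ P` is separable as soon as it is coprime to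
`P' = 8 (X − 1/2)`, i.e. as soon as `g` does not vanish at the critical value `P(1/2) = −1`;
and `g(−1) = −2t`.
-/

open Polynomial

namespace Polynomial

theorem Separable.comp_of_isCoprime_derivative {R : Type*} [CommRing R] {g P : R[X]}
    (hg : g.Separable) (hP : IsCoprime (g.comp P) (derivative P)) : (g.comp P).Separable := by
  rw [Separable, derivative_comp]
  exact hP.mul_right (IsCoprime.map hg (compRingHom P))

variable {K : Type*} [Field K]

theorem isCoprime_X_sub_C_of_not_isRoot {p : K[X]} {a : K} (h : ¬p.IsRoot a) :
    IsCoprime p (X - C a) :=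
  ((irreducible_X_sub_C a).coprime_iff_not_dvd.2 (mt dvd_iff_isRoot.1 h)).symm

theorem separable_X_sq_sub_C_mul_X_sub_one {s : K} (h2 : (2 : K) ≠ 0) (hs0 : s ≠ 0)
    (hs1 : s ≠ 1) : ((X ^ 2 - C s) * (X - 1) : K[X]).Separable := by
  have hlin : (X - 1 : K[X]).Separable := by simpa using separable_X_sub_C (x := (1 : K))
  have hcop : IsCoprime (X ^ 2 - C s) (X - 1 : K[X]) := by
    have := isCoprime_X_sub_C_of_not_isRoot (p := X ^ 2 - C s) (a := 1)
      (by simpa [sub_eq_zero] using hs1.symm)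
    rwa [map_one] at this
  exact (separable_X_pow_sub_C s (by simpa using h2) hs0).mul hlin hcop

end Polynomial

/-- For `t ∉ {0,1}` the degree-6 polynomial `(P(X)² − (1−t))·(P(X) − 1)` with
`P(X) = 4·X·(X−1)` is squarefree over a field of characteristic zero. -/
theorem stmt_6 (K : Type*) [Field K] [CharZero K] (t : K) (h0 : t ≠ 0) (h1 : t ≠ 1) :
    Squarefree (((4 * X * (X - 1)) ^ 2 - C (1 - t)) * (4 * X * (X - 1) - 1) : K[X]) := by
  set P : K[X] := 4 * X * (X - 1)
  have hP' : derivative P = C 8 * (X - C 2⁻¹) := by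
    simp only [P, derivative_mul, derivative_X, derivative_sub, derivative_one, derivative_ofNat]
    rw [mul_sub (C (8 : K)), ← C_mul, show (8 : K) * 2⁻¹ = 4 by norm_num, map_ofNat, C_ofNat]
    ring
  have hsep : (((X ^ 2 - C (1 - t)) * (X - 1) : K[X]).comp P).Separable := by
    refine (separable_X_sq_sub_C_mul_X_sub_one two_ne_zero (sub_ne_zero.2 h1.symm)
      (by simpa using h0)).comp_of_isCoprime_derivative ?_
    have h8 : IsUnit (C 8 : K[X]) := Polynomial.isUnit_C.2 (isUnit_iff_ne_zero.2 (by norm_num))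
    rw [hP', isCoprime_mul_unit_left_right h8]
    apply isCoprime_X_sub_C_of_not_isRoot
    norm_num [P, h0]
  simpa [P] using hsep.squarefree
end

section
/- Let G be a group acting freely on a set X, i.e. for all g ∈ G and x ∈ X, if g • x = x then g = 1. Consider the induced action of G on the free group F(X) on the basis X, given by permuting the basis elements. If g ∈ G and f ∈ F(X) satisfy g • f = f, then g = 1 or f = 1. -/
/-!
An injective map of bases sends reduced words to reduced words, so `FreeGroup.map` acts on the
reduced word of an element letter by letter. Hence if `g` fixes `f ≠ 1`, it fixes every letter
of the reduced word of `f`, and freeness of the action on `X` gives `g = 1`.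
-/

namespace FreeGroup

variable {α β : Type*}

theorem IsReduced.map_of_injective {φ : α → β} (hφ : Function.Injective φ)
    {L : List (α × Bool)} (hL : IsReduced L) : IsReduced (L.map fun p => (φ p.1, p.2)) :=
  List.isChain_map_of_isChain _ (fun _ _ h heq => h (hφ heq)) hL

theorem toWord_map_of_injective [DecidableEq α] [DecidableEq β] {φ : α → β}
    (hφ : Function.Injective φ) (x : FreeGroup α) :
    (map φ x).toWord = x.toWord.map fun p => (φ p.1, p.2) := by
  conv_lhs => rw [← mk_toWord (x := x)]
  rw [map.mk, toWord_mk, (isReduced_toWord.map_of_injective hφ).reduce_eq]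

theorem apply_eq_self_of_map_eq_self [DecidableEq α] {φ : α → α} (hφ : Function.Injective φ)
    {x : FreeGroup α} (hx : map φ x = x) {p : α × Bool} (hp : p ∈ x.toWord) : φ p.1 = p.1 := by
  have hword : x.toWord.map (fun p => (φ p.1, p.2)) = x.toWord.map id := by
    rw [← toWord_map_of_injective hφ, hx, List.map_id]
  exact congrArg Prod.fst (List.map_eq_map_iff.mp hword p hp)

end FreeGroup

/-- Discrete analogue of Lemma 5.3: if a group `G` acts freely on a set `X`,
then for the induced action on the free group `F(X)` (by permuting the basis),
`g • f = f` forces `g = 1` or `f = 1`. -/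
theorem stmt_9 {G X : Type*} [Group G] [MulAction G X]
    (hfree : ∀ (g : G) (x : X), g • x = x → g = 1)
    (g : G) (f : FreeGroup X)
    (hfix : FreeGroup.map (fun x => g • x) f = f) :
    g = 1 ∨ f = 1 := by
  classical
  refine or_iff_not_imp_right.mpr fun hf => ?_
  obtain ⟨p, hp⟩ := List.exists_mem_of_ne_nil _ (mt FreeGroup.toWord_eq_nil_iff.mp hf)
  exact hfree g p.1 (FreeGroup.apply_eq_self_of_map_eq_self (MulAction.injective g) hfix hp)
end

section
/- Let F₃ be the free group on three generators x, y, z, and let φ be the automorphism of F₃ determined by φ(x) = x, φ(y) = x·y·x⁻¹, φ(z) = x⁻¹·z·x. Then the fixed subgroup {g ∈ F₃ : φ(g) = g} is exactly the cyclic subgroup generated by x. -/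
open FreeGroup SemidirectProduct

namespace Stmt10Aux

/-- reduce commutes with injective letter maps -/
lemma reduce_map {α β : Type*} [DecidableEq α] [DecidableEq β] {f : α → β}
    (hf : Function.Injective f) (L : List (α × Bool)) :
    FreeGroup.reduce (L.map fun x => (f x.1, x.2)) =
      (FreeGroup.reduce L).map fun x => (f x.1, x.2) := by
  induction L with
  | nil => rfl
  | cons x L ih =>
      rw [List.map_cons, FreeGroup.reduce.cons, FreeGroup.reduce.cons, ih]
      cases h : FreeGroup.reduce L with
      | nil => simp
      | cons hd tl =>
          simp only [List.map_cons]
          by_cases hc : x.1 = hd.1 ∧ x.2 = !hd.2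
          · rw [if_pos hc, if_pos ⟨congrArg f hc.1, hc.2⟩]
          · rw [if_neg hc, if_neg (by simpa [hf.eq_iff] using hc)]
            simp

lemma toWord_map {α : Type*} [DecidableEq α] {f : α → α} (hf : Function.Injective f)
    (g : FreeGroup α) :
    (FreeGroup.map f g).toWord = g.toWord.map fun x => (f x.1, x.2) := by
  conv_lhs => rw [← FreeGroup.mk_toWord (x := g)]
  rw [FreeGroup.map.mk, FreeGroup.toWord_mk, reduce_map hf, FreeGroup.reduce_toWord]

lemma fixed_eq_one {α : Type*} [DecidableEq α] {f : α → α} (hf : Function.Injective f)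
    (hne : ∀ a, f a ≠ a) {g : FreeGroup α} (h : FreeGroup.map f g = g) : g = 1 := by
  have hw := toWord_map hf g
  rw [h] at hw
  cases hG : g.toWord with
  | nil => exact FreeGroup.toWord_eq_nil_iff.mp hG
  | cons a L =>
      rw [hG, List.map_cons] at hw
      exact absurd (congrArg Prod.fst (List.head_eq_of_cons_eq hw)).symm (hne a.1)

/-- ext for MulEquivs out of a free group -/
lemma mulEquiv_ext {α H : Type*} [Group H] {e₁ e₂ : FreeGroup α ≃* H}
    (h : ∀ a, e₁ (FreeGroup.of a) = e₂ (FreeGroup.of a)) : e₁ = e₂ :=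
  MulEquiv.toMonoidHom_injective (FreeGroup.ext_hom _ _ h)

abbrev B := ℤ × Fin 2

abbrev N := FreeGroup B

/-- the shift equiv for the conjugation action of x -/
def shift (k : ℤ) : B ≃ B := (Equiv.subRight k).prodCongr (Equiv.refl (Fin 2))

@[simp] lemma shift_apply (k : ℤ) (p : B) : shift k p = (p.1 - k, p.2) := rfl

/-- the conjugation action of ℤ on N -/
def act : Multiplicative ℤ →* MulAut N where
  toFun k := freeGroupCongr (shift k.toAdd)
  map_one' := mulEquiv_ext fun b => by simp
  map_mul' a b := mulEquiv_ext fun p => by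
    simp [MulAut.mul_apply, sub_sub, add_comm]

@[simp] lemma act_of (k : Multiplicative ℤ) (p : B) :
    act k (FreeGroup.of p) = FreeGroup.of (p.1 - k.toAdd, p.2) := by
  simp [act]

def d : Fin 2 → ℤ := ![-1, 1]

/-- the equiv of letters induced by φ -/
def twist : B ≃ B where
  toFun p := (p.1 + d p.2, p.2)
  invFun p := (p.1 - d p.2, p.2)
  left_inv p := by simp
  right_inv p := by simp

@[simp] lemma twist_apply (p : B) : twist p = (p.1 + d p.2, p.2) := rfl

@[simp] lemma act_inv_of (k : Multiplicative ℤ) (p : B) :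
    (act k)⁻¹ (FreeGroup.of p) = FreeGroup.of (p.1 + k.toAdd, p.2) := by
  rw [← _root_.map_inv, act_of]
  simp [sub_neg_eq_add]

abbrev G := N ⋊[act] Multiplicative ℤ

/-- σ : the automorphism of N induced by twist -/
def σ : MulAut N := freeGroupCongr twist

@[simp] lemma σ_of (p : B) : σ (FreeGroup.of p) = FreeGroup.of (p.1 + d p.2, p.2) := by
  simp [σ]

lemma σ_comm : ∀ k : Multiplicative ℤ,
    σ.toMonoidHom.comp (act k).toMonoidHom =
      (act (MonoidHom.id (Multiplicative ℤ) k)).toMonoidHom.comp σ.toMonoidHom := fun k =>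
  FreeGroup.ext_hom _ _ fun p => by
    simp [sub_add_eq_add_sub]

/-- the twisted endomorphism of G corresponding to φ -/
def ψ : G →* G := SemidirectProduct.map σ.toMonoidHom (MonoidHom.id _) σ_comm

abbrev X : FreeGroup (Fin 3) := FreeGroup.of 0

/-- the embedding F₃ → G -/
def f : FreeGroup (Fin 3) →* G :=
  FreeGroup.lift ![inr (Multiplicative.ofAdd 1), inl (.of (0, 0)), inl (.of (0, 1))]

lemma gcond : ∀ k : Multiplicative ℤ,
    (FreeGroup.lift fun b : B => X ^ (-b.1) * (![FreeGroup.of 1, FreeGroup.of 2] b.2) * X ^ b.1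
        : N →* FreeGroup (Fin 3)).comp (act k).toMonoidHom =
      (MulAut.conj ((zpowersHom (FreeGroup (Fin 3)) X) k)).toMonoidHom.comp
        (FreeGroup.lift fun b : B =>
          X ^ (-b.1) * (![FreeGroup.of 1, FreeGroup.of 2] b.2) * X ^ b.1) := fun k =>
  FreeGroup.ext_hom _ _ fun p => by
    simp only [MonoidHom.comp_apply, MulEquiv.coe_toMonoidHom, act_of, FreeGroup.lift_apply_of,
      MulAut.conj_apply, zpowersHom_apply]
    group

/-- the projection G → F₃ -/
def gmap : G →* FreeGroup (Fin 3) :=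
  SemidirectProduct.lift
    (FreeGroup.lift fun b : B => X ^ (-b.1) * (![FreeGroup.of 1, FreeGroup.of 2] b.2) * X ^ b.1)
    (zpowersHom _ X) gcond

lemma gmap_comp_f : gmap.comp f = MonoidHom.id _ :=
  FreeGroup.ext_hom _ _ fun i => by
    fin_cases i <;>
      simp [f, gmap, X, zpowersHom_apply]

end Stmt10Aux

open Stmt10Aux in
/-- Discrete analogue of Lemma 5.4: in the free group on three generators
`x, y, z`, the fixed subgroup of the automorphism `x ↦ x`, `y ↦ x y x⁻¹`,
`z ↦ x⁻¹ z x` is exactly the cyclic subgroup generated by `x`. -/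
theorem stmt_10 (φ : FreeGroup (Fin 3) →* FreeGroup (Fin 3))
    (hx : φ (FreeGroup.of 0) = FreeGroup.of 0)
    (hy : φ (FreeGroup.of 1) = FreeGroup.of 0 * FreeGroup.of 1 * (FreeGroup.of 0)⁻¹)
    (hz : φ (FreeGroup.of 2) = (FreeGroup.of 0)⁻¹ * FreeGroup.of 2 * FreeGroup.of 0) :
    ∀ g : FreeGroup (Fin 3),
      φ g = g ↔ g ∈ Subgroup.zpowers (FreeGroup.of (0 : Fin 3)) := by
  intro g
  constructor
  · intro hg
    -- key commuting square
    have hcomm : f.comp φ = ψ.comp f := by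
      refine FreeGroup.ext_hom _ _ fun i => ?_
      have h1 : f (FreeGroup.of (0 : Fin 3)) = inr (Multiplicative.ofAdd 1) := by simp [f]
      have h2 : f (FreeGroup.of (1 : Fin 3)) = inl (.of (0, 0)) := by simp [f]
      have h3 : f (FreeGroup.of (2 : Fin 3)) = inl (.of (0, 1)) := by simp [f]
      fin_cases i
      · show f (φ (FreeGroup.of 0)) = ψ (f (FreeGroup.of 0))
        rw [hx, h1]
        ext <;> simp [ψ, SemidirectProduct.map, d]
      · show f (φ (FreeGroup.of 1)) = ψ (f (FreeGroup.of 1))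
        rw [hy, _root_.map_mul, _root_.map_mul, _root_.map_inv, h1, h2,
          ← _root_.map_inv, ← inl_aut]
        ext <;> simp [ψ, SemidirectProduct.map, d]
      · show f (φ (FreeGroup.of 2)) = ψ (f (FreeGroup.of 2))
        rw [hz, _root_.map_mul, _root_.map_mul, _root_.map_inv, h1, h3,
          ← _root_.map_inv, ← inl_aut_inv]
        ext <;> simp [ψ, SemidirectProduct.map, d]
        rw [← MulAut.inv_def, act_inv_of]; simp
    have hfix : ψ (f g) = f g := by
      have := DFunLike.congr_fun hcomm g
      simp only [MonoidHom.comp_apply, hg] at this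
      exact this.symm
    -- extract the left component
    have hleft : σ ((f g).left) = (f g).left := by
      have := congrArg SemidirectProduct.left hfix
      simpa [ψ, SemidirectProduct.map] using this
    have hone : (f g).left = 1 := by
      refine fixed_eq_one (f := (twist : B ≃ B)) twist.injective ?_ ?_
      · rintro ⟨p1, p2⟩ hp
        have : p1 + d p2 = p1 := congrArg Prod.fst hp
        have hd : d p2 = 0 := by omega
        fin_cases p2 <;> simp [d] at hd
      · simpa [σ] using hleft
    have hfg : f g = inr ((f g).right) := by
      ext <;> simp [hone]
    have hgid : g = gmap (f g) := by
      have := DFunLike.congr_fun gmap_comp_f g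
      simpa using this.symm
    rw [hfg] at hgid
    have hval : gmap (SemidirectProduct.inr ((f g).right)) =
        FreeGroup.of (0 : Fin 3) ^ ((f g).right).toAdd := by
      rw [gmap, SemidirectProduct.lift_inr, zpowersHom_apply]
    exact Subgroup.mem_zpowers_iff.mpr ⟨((f g).right).toAdd, (hval.symm.trans hgid.symm)⟩
  · rintro ⟨k, rfl⟩
    simp [map_zpow, hx]
end

section
/- Let F₄ be the free group on four generators w, x, y, z, and let φ be the automorphism of F₄ determined by φ(w) = w, φ(x) = x, φ(y) = x·y·x⁻¹, φ(z) = w⁻¹·x⁻¹·z·x·w. Then the fixed subgroup {g ∈ F₄ : φ(g) = g} is exactly the subgroup generated by w and x. -/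
open FreeGroup SemidirectProduct

namespace Stmt11

abbrev K := FreeGroup (Fin 2)
abbrev F4 := FreeGroup (Fin 4)
abbrev NN := FreeGroup (K × Fin 2)

def a : K := .of 0
def b : K := .of 1
def w : F4 := .of 0
def x : F4 := .of 1

/-- the permutation equiv of the basis indexed by k -/
def e (k : K) : K × Fin 2 ≃ K × Fin 2 := (Equiv.mulLeft k).prodCongr (Equiv.refl _)

lemma e_apply (k : K) (p : K × Fin 2) : e k p = (k * p.1, p.2) := rfl

lemma e_trans (k₁ k₂ : K) : (e k₂).trans (e k₁) = e (k₁ * k₂) := by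
  ext p : 1 <;> simp [e, Prod.map, mul_assoc]

def act : K →* MulAut NN where
  toFun k := FreeGroup.freeGroupCongr (e k)
  map_one' := by
    have : e 1 = Equiv.refl _ := by ext p : 1 <;> simp [e, Prod.map]
    show freeGroupCongr (e 1) = 1
    rw [this, freeGroupCongr_refl]; rfl
  map_mul' k₁ k₂ := by
    apply MulEquiv.ext; intro m
    rw [MulAut.mul_apply]
    have := congrArg (fun (t : NN ≃* NN) => t m)
      ((freeGroupCongr_trans (e k₂) (e k₁)).trans (congrArg freeGroupCongr (e_trans k₁ k₂)))
    simpa using this.symm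

lemma act_of (k : K) (p : K × Fin 2) : act k (FreeGroup.of p) = FreeGroup.of (k * p.1, p.2) := by
  simp [act, e_apply]

abbrev H := NN ⋊[act] K

def σ : K →* F4 := FreeGroup.lift ![w, x]
def π : F4 →* K := FreeGroup.lift ![a, b, 1, 1]
def yz : Fin 2 → F4 := ![.of 2, .of 3]

def f₁ : NN →* F4 := FreeGroup.lift fun p => σ p.1 * yz p.2 * (σ p.1)⁻¹

lemma f₁_of (p : K × Fin 2) : f₁ (FreeGroup.of p) = σ p.1 * yz p.2 * (σ p.1)⁻¹ :=
  FreeGroup.lift_apply_of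

lemma hcompat : ∀ k : K,
    f₁.comp (act k).toMonoidHom = (MulAut.conj (σ k)).toMonoidHom.comp f₁ := by
  intro k
  apply FreeGroup.ext_hom
  intro p
  simp only [MonoidHom.comp_apply, MulEquiv.coe_toMonoidHom, act_of, f₁_of, MulAut.conj_apply,
    map_mul]
  rw [MonoidHom.map_mul σ k p.1, mul_inv_rev]
  group

def Φinv : H →* F4 := SemidirectProduct.lift f₁ σ hcompat

def Φ : F4 →* H :=
  FreeGroup.lift ![inr a, inr b, inl (.of (1, 0)), inl (.of (1, 1))]

lemma ΦinvΦ : Φinv.comp Φ = MonoidHom.id F4 := by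
  apply FreeGroup.ext_hom
  intro i
  fin_cases i <;>
    simp [Φ, Φinv, f₁_of, σ, yz, w, x, a, b]


lemma πσ : π.comp σ = MonoidHom.id K := by
  apply FreeGroup.ext_hom
  intro i
  fin_cases i <;> simp [π, σ, w, x, a, b]

lemma Φσ : Φ.comp σ = (inr : K →* H) := by
  apply FreeGroup.ext_hom
  intro i
  fin_cases i <;> simp [Φ, σ, w, x, a, b]

lemma rightHomΦ : (rightHom : H →* K).comp Φ = π := by
  apply FreeGroup.ext_hom
  intro i
  fin_cases i <;> simp [Φ, π, a, b]

lemma ΦΦinv : Φ.comp Φinv = MonoidHom.id H := by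
  apply SemidirectProduct.hom_ext
  · apply FreeGroup.ext_hom
    intro p
    obtain ⟨u, i⟩ := p
    have hσ : Φ (σ u) = inr u := DFunLike.congr_fun Φσ u
    have : Φ (yz i) = inl (FreeGroup.of (1, i)) := by
      fin_cases i <;> simp [Φ, yz]
    simp only [MonoidHom.comp_apply, MonoidHom.id_apply, Φinv, lift_inl, f₁_of, map_mul,
      map_inv, hσ, this]
    rw [Φ.map_mul, Φ.map_mul, Φ.map_inv, hσ, this, ← map_inv (inr : Stmt11.K →* Stmt11.H) u, ← inl_aut, act_of, mul_one]

  · apply FreeGroup.ext_hom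
    intro i
    fin_cases i <;> simp [Φinv, Φ, σ, w, x, a, b]

/-- the basis permutation -/
def cc : Fin 2 → K := ![b, a⁻¹ * b⁻¹]

def f : K × Fin 2 → K × Fin 2 := fun p => (p.1 * cc p.2, p.2)

/-- exponent-sum homomorphism showing `cc i ≠ 1`. -/
def χ : K →* Multiplicative ℤ := FreeGroup.lift ![Multiplicative.ofAdd 1, Multiplicative.ofAdd 1]

lemma cc_ne_one (i : Fin 2) : cc i ≠ 1 := by
  intro hcc
  have := congrArg χ hcc
  fin_cases i <;>
    simp [cc, χ, a, b, ← ofAdd_neg, ← ofAdd_add] at this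

lemma f_ne (p : K × Fin 2) : f p ≠ p := by
  intro hfp
  have h1 : p.1 * cc p.2 = p.1 := congrArg Prod.fst hfp
  exact cc_ne_one p.2 (by rwa [mul_eq_left] at h1)


lemma fix_map_eq_one {α : Type*} (f : α → α) (hf : ∀ t, f t ≠ t)
    (m : FreeGroup α) (h : FreeGroup.map f m = m) : m = 1 := by
  classical
  have h1 : FreeGroup.mk ((toWord m).map fun q => (f q.1, q.2)) = FreeGroup.mk (toWord m) :=
    calc FreeGroup.mk ((toWord m).map fun q => (f q.1, q.2))
        = FreeGroup.map f (FreeGroup.mk (toWord m)) := (map.mk).symm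
      _ = FreeGroup.map f m := by rw [mk_toWord]
      _ = m := h
      _ = FreeGroup.mk (toWord m) := (mk_toWord).symm
  have hred : reduce ((toWord m).map fun q => (f q.1, q.2)) = reduce (toWord m) :=
    reduce.sound h1
  rw [reduce_toWord] at hred
  have hRed : FreeGroup.Red ((toWord m).map fun q => (f q.1, q.2)) (toWord m) := by
    have := reduce.red (L := (toWord m).map fun q => (f q.1, q.2))
    rwa [hred] at this
  have heq : toWord m = (toWord m).map fun q => (f q.1, q.2) :=
    hRed.sublist.eq_of_length (by simp)
  cases hc : toWord m with
  | nil => apply toWord_injective; rw [hc, toWord_one]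
  | cons q t =>
    exfalso
    rw [hc, List.map_cons] at heq
    have hq : q = (f q.1, q.2) := by injection heq
    exact hf q.1 (congrArg Prod.fst hq.symm)

section Phi

variable (φ : F4 →* F4)
  (hw : φ (FreeGroup.of 0) = FreeGroup.of 0)
  (hx : φ (FreeGroup.of 1) = FreeGroup.of 1)
  (hy : φ (FreeGroup.of 2) = FreeGroup.of 1 * FreeGroup.of 2 * (FreeGroup.of 1)⁻¹)
  (hz : φ (FreeGroup.of 3) =
    (FreeGroup.of 0)⁻¹ * (FreeGroup.of 1)⁻¹ * FreeGroup.of 3 * FreeGroup.of 1 * FreeGroup.of 0)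

include hw hx in
lemma φσ : φ.comp σ = σ := by
  apply FreeGroup.ext_hom; intro i; fin_cases i <;> simp [σ, w, x, hw, hx]

include hw hx hy hz in
lemma key : Φ.comp (φ.comp (Φinv.comp inl)) = (inl : NN →* H).comp (FreeGroup.map f) := by
  have hσfix : ∀ v, φ (σ v) = σ v := fun v => DFunLike.congr_fun (φσ φ hw hx) v
  have hΦf₁ : ∀ (u : K) (i : Fin 2), Φ (σ u * yz i * (σ u)⁻¹) = inl (FreeGroup.of (u, i)) := by
    intro u i
    have h0 := DFunLike.congr_fun ΦΦinv (inl (FreeGroup.of (u, i)) : H)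
    simpa [Φinv, f₁_of] using h0
  apply FreeGroup.ext_hom
  rintro ⟨u, i⟩
  simp only [MonoidHom.comp_apply, Φinv, lift_inl, f₁_of, FreeGroup.map.of]
  rw [φ.map_mul, φ.map_mul, φ.map_inv, hσfix]
  fin_cases i
  · show Φ (σ u * φ (yz 0) * (σ u)⁻¹) = inl (FreeGroup.of (f (u, 0)))
    have hyz : (yz 0 : F4) = FreeGroup.of 2 := rfl
    rw [hyz, hy]
    have hb : σ b = FreeGroup.of 1 := by simp [σ, b, x]
    have hrw : σ u * (FreeGroup.of 1 * FreeGroup.of 2 * (FreeGroup.of 1)⁻¹) * (σ u)⁻¹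
        = σ (u * b) * yz 0 * (σ (u * b))⁻¹ := by
      rw [σ.map_mul, hb, hyz]; group
    rw [hrw, hΦf₁]
    have : f (u, 0) = (u * b, 0) := by simp [f, cc]
    rw [this]
  · show Φ (σ u * φ (yz 1) * (σ u)⁻¹) = inl (FreeGroup.of (f (u, 1)))
    have hyz : (yz 1 : F4) = FreeGroup.of 3 := rfl
    rw [hyz, hz]
    have ha : σ a = FreeGroup.of 0 := by simp [σ, a, w]
    have hb : σ b = FreeGroup.of 1 := by simp [σ, b, x]
    have hrw : σ u * ((FreeGroup.of 0)⁻¹ * (FreeGroup.of 1)⁻¹ * FreeGroup.of 3 * FreeGroup.of 1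
          * FreeGroup.of 0) * (σ u)⁻¹
        = σ (u * (a⁻¹ * b⁻¹)) * yz 1 * (σ (u * (a⁻¹ * b⁻¹)))⁻¹ := by
      rw [σ.map_mul, σ.map_mul, σ.map_inv, σ.map_inv, ha, hb, hyz]; group
    rw [hrw, hΦf₁]
    have : f (u, 1) = (u * (a⁻¹ * b⁻¹), 1) := by simp [f, cc, mul_assoc]
    rw [this]

end Phi

end Stmt11

/-- Discrete analogue of Lemma 5.5: in the free group on four generators
`w, x, y, z`, the fixed subgroup of the automorphism `w ↦ w`, `x ↦ x`,
`y ↦ x y x⁻¹`, `z ↦ w⁻¹ x⁻¹ z x w` is exactly the subgroup generated by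
`w` and `x`. -/
theorem stmt_11 (φ : FreeGroup (Fin 4) →* FreeGroup (Fin 4))
    (hw : φ (FreeGroup.of 0) = FreeGroup.of 0)
    (hx : φ (FreeGroup.of 1) = FreeGroup.of 1)
    (hy : φ (FreeGroup.of 2) = FreeGroup.of 1 * FreeGroup.of 2 * (FreeGroup.of 1)⁻¹)
    (hz : φ (FreeGroup.of 3) =
      (FreeGroup.of 0)⁻¹ * (FreeGroup.of 1)⁻¹ * FreeGroup.of 3 * FreeGroup.of 1 * FreeGroup.of 0) :
    ∀ g : FreeGroup (Fin 4),
      φ g = g ↔ g ∈ Subgroup.closure {FreeGroup.of (0 : Fin 4), FreeGroup.of (1 : Fin 4)} := by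
  intro g
  have hσfix : ∀ v, φ (Stmt11.σ v) = Stmt11.σ v :=
    fun v => DFunLike.congr_fun (Stmt11.φσ φ hw hx) v
  have hclosure : Subgroup.closure {FreeGroup.of (0 : Fin 4), FreeGroup.of (1 : Fin 4)}
      = Stmt11.σ.range := by
    rw [Stmt11.σ, FreeGroup.range_lift_eq_closure]
    congr 1
    ext t
    constructor
    · rintro (rfl | rfl)
      · exact ⟨0, rfl⟩
      · exact ⟨1, rfl⟩
    · rintro ⟨i, rfl⟩
      fin_cases i
      · exact Or.inl rfl
      · exact Or.inr rfl
  constructor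
  · intro hg
    rw [hclosure]
    set n := g * (Stmt11.σ (Stmt11.π g))⁻¹ with hn
    have hfixn : φ n = n := by rw [hn, φ.map_mul, φ.map_inv, hg, hσfix]
    have hπσ : ∀ v, Stmt11.π (Stmt11.σ v) = v := fun v => DFunLike.congr_fun Stmt11.πσ v
    have hπn : Stmt11.π n = 1 := by
      rw [hn, Stmt11.π.map_mul, Stmt11.π.map_inv, hπσ, mul_inv_cancel]
    have hker : SemidirectProduct.rightHom (Stmt11.Φ n) = 1 := by
      have h5 := DFunLike.congr_fun Stmt11.rightHomΦ n
      rw [MonoidHom.comp_apply] at h5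
      rw [h5, hπn]
    obtain ⟨m, hm⟩ : ∃ m, SemidirectProduct.inl m = Stmt11.Φ n := by
      have : Stmt11.Φ n ∈ (SemidirectProduct.inl : Stmt11.NN →* Stmt11.H).range := by
        rw [SemidirectProduct.range_inl_eq_ker_rightHom]; exact hker
      exact this
    have hΦinvΦ : ∀ t, Stmt11.Φinv (Stmt11.Φ t) = t :=
      fun t => DFunLike.congr_fun Stmt11.ΦinvΦ t
    have hkey := DFunLike.congr_fun (Stmt11.key φ hw hx hy hz) m
    simp only [MonoidHom.comp_apply] at hkey
    rw [hm, hΦinvΦ, hfixn] at hkey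
    have hmfix : FreeGroup.map Stmt11.f m = m :=
      SemidirectProduct.inl_injective ((hm.trans hkey).symm)
    have hm1 : m = 1 := Stmt11.fix_map_eq_one _ Stmt11.f_ne m hmfix
    have hn1 : n = 1 := by
      have := hΦinvΦ n
      rw [← hm, hm1] at this
      simpa using this.symm
    have hgσ : g = Stmt11.σ (Stmt11.π g) := by
      rw [hn] at hn1
      exact (mul_inv_eq_one.mp hn1)
    exact ⟨Stmt11.π g, hgσ.symm⟩
  · intro hg
    rw [hclosure] at hg
    obtain ⟨v, rfl⟩ := hg
    exact hσfix v
end
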